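/- arXiv:1109.4242 — 6 statements merged into one kernel-verified Lean document; each statement's English description precedes it below -/
import Mathlib

section
/- For any complex number x with |x| < 1, the infinite product ∏_{j=0}^∞ (1 - x^{2^j}) converges and equals ∑_{ν=0}^∞ (-1)^{s₂(ν)} x^ν, where s₂(ν) is the number of ones in the binary expansion of ν. -/
/-- The binary digit sum (number of ones in the binary expansion). -/
def s₂ (n : ℕ) : ℕ := (Nat.digits 2 n).sum

lemma s₂_rec (n : ℕ) : s₂ n = n % 2 + s₂ (n / 2) := by
  rcases Nat.eq_zero_or_pos n with h | h
  · simp [h, s₂]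
  · unfold s₂
    rw [Nat.digits_def' (by norm_num : 1 < 2) h]
    simp

lemma s₂_add_pow (n : ℕ) : ∀ ν < 2 ^ n, s₂ (2 ^ n + ν) = s₂ ν + 1 := by
  induction n with
  | zero =>
      intro ν hν
      interval_cases ν
      simp [s₂]
  | succ n ih =>
      intro ν hν
      have hk : (0:ℕ) < 2 ^ n := Nat.pow_pos (by norm_num)
      have h1 : (2 ^ (n+1) + ν) % 2 = ν % 2 := by
        have : 2 ^ (n+1) = 2 * 2 ^ n := by ring
        omega
      have h2 : (2 ^ (n+1) + ν) / 2 = 2 ^ n + ν / 2 := by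
        have : 2 ^ (n+1) = 2 * 2 ^ n := by ring
        omega
      have h3 : ν / 2 < 2 ^ n := by
        have : 2 ^ (n+1) = 2 * 2 ^ n := by ring
        omega
      rw [s₂_rec (2 ^ (n+1) + ν), h1, h2, ih _ h3, s₂_rec ν]
      ring

lemma partial_identity (x : ℂ) (n : ℕ) :
    ∏ j ∈ Finset.range n, (1 - x ^ (2 ^ j)) =
      ∑ ν ∈ Finset.range (2 ^ n), (-1 : ℂ) ^ s₂ ν * x ^ ν := by
  induction n with
  | zero => simp [s₂]
  | succ n ih =>
      rw [Finset.prod_range_succ, ih]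
      have h2 : 2 ^ (n+1) = 2 ^ n + 2 ^ n := by ring
      rw [h2, Finset.sum_range_add]
      have hshift : ∀ ν ∈ Finset.range (2 ^ n),
          (-1 : ℂ) ^ s₂ (2 ^ n + ν) * x ^ (2 ^ n + ν) =
            -(x ^ (2 ^ n) * ((-1 : ℂ) ^ s₂ ν * x ^ ν)) := by
        intro ν hν
        rw [s₂_add_pow n ν (Finset.mem_range.mp hν), pow_succ, pow_add]
        ring
      rw [Finset.sum_congr rfl hshift, Finset.sum_neg_distrib, ← Finset.mul_sum]
      ring

/-- For `‖x‖ < 1` the infinite product `∏_j (1 - x^{2^j})` converges and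
equals `∑_ν (-1)^{s₂ ν} x^ν`. -/
theorem multipliable_and_tprod_eq (x : ℂ) (hx : ‖x‖ < 1) :
    Multipliable (fun j : ℕ => 1 - x ^ (2 ^ j)) ∧
    ∏' j : ℕ, (1 - x ^ (2 ^ j)) = ∑' ν : ℕ, (-1 : ℂ) ^ s₂ ν * x ^ ν := by
  have hx0 : 0 ≤ ‖x‖ := norm_nonneg x
  have hnorm_pow : ∀ j : ℕ, ‖x ^ (2 ^ j)‖ ≤ ‖x‖ ^ j := by
    intro j
    rw [norm_pow]
    exact pow_le_pow_of_le_one hx0 hx.le (Nat.lt_two_pow_self (n := j)).le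
  have hne : ∀ j : ℕ, (1 : ℂ) - x ^ (2 ^ j) ≠ 0 := by
    intro j
    have h1 : ‖x ^ (2 ^ j)‖ < 1 := by
      rw [norm_pow]
      exact pow_lt_one₀ hx0 hx (show 0 < 2 ^ j from Nat.pow_pos (by norm_num)).ne'
    intro h
    have : x ^ (2 ^ j) = 1 := by linear_combination -h
    rw [this] at h1
    simp at h1
  -- summability of the logs
  have hlog : Summable fun j : ℕ => Complex.log (1 - x ^ (2 ^ j)) := by
    apply Summable.of_norm_bounded_eventually_nat (g := fun j => (3/2 : ℝ) * ‖x‖ ^ j)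
    · exact (summable_geometric_of_lt_one hx0 hx).mul_left _
    · have hto : Filter.Tendsto (fun j : ℕ => ‖x‖ ^ j) Filter.atTop (nhds 0) :=
        tendsto_pow_atTop_nhds_zero_of_lt_one hx0 hx
      filter_upwards [hto.eventually_le_const (by norm_num : (0:ℝ) < 1/2)] with j hj
      have hsmall : ‖-(x ^ (2 ^ j))‖ ≤ 1/2 := by
        rw [norm_neg]; exact (hnorm_pow j).trans hj
      have := Complex.norm_log_one_add_half_le_self hsmall
      have heq : (1 : ℂ) + -(x ^ (2 ^ j)) = 1 - x ^ (2 ^ j) := by ring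
      rw [heq] at this
      refine this.trans ?_
      rw [norm_neg]
      exact mul_le_mul_of_nonneg_left (hnorm_pow j) (by norm_num)
  have hmult : Multipliable fun j : ℕ => 1 - x ^ (2 ^ j) := by
    have := Complex.multipliable_of_summable_log hlog
    exact this
  refine ⟨hmult, ?_⟩
  -- summability of the series
  have hsum : Summable fun ν : ℕ => (-1 : ℂ) ^ s₂ ν * x ^ ν := by
    apply Summable.of_norm_bounded (g := fun ν => ‖x‖ ^ ν)
      (summable_geometric_of_lt_one hx0 hx)
    intro ν
    rw [norm_mul, norm_pow, norm_pow, norm_neg, norm_one, one_pow, one_mul]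
  -- limits
  have hP : Filter.Tendsto (fun n : ℕ => ∏ j ∈ Finset.range n, (1 - x ^ (2 ^ j)))
      Filter.atTop (nhds (∏' j : ℕ, (1 - x ^ (2 ^ j)))) :=
    hmult.hasProd.tendsto_prod_nat
  have hS : Filter.Tendsto (fun N : ℕ => ∑ ν ∈ Finset.range N, (-1 : ℂ) ^ s₂ ν * x ^ ν)
      Filter.atTop (nhds (∑' ν : ℕ, (-1 : ℂ) ^ s₂ ν * x ^ ν)) :=
    hsum.hasSum.tendsto_sum_nat
  have hpow : Filter.Tendsto (fun n : ℕ => 2 ^ n) Filter.atTop Filter.atTop :=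
    tendsto_pow_atTop_atTop_of_one_lt (by norm_num)
  have hS2 : Filter.Tendsto
      (fun n : ℕ => ∑ ν ∈ Finset.range (2 ^ n), (-1 : ℂ) ^ s₂ ν * x ^ ν)
      Filter.atTop (nhds (∑' ν : ℕ, (-1 : ℂ) ^ s₂ ν * x ^ ν)) :=
    hS.comp hpow
  have hP' : Filter.Tendsto
      (fun n : ℕ => ∑ ν ∈ Finset.range (2 ^ n), (-1 : ℂ) ^ s₂ ν * x ^ ν)
      Filter.atTop (nhds (∏' j : ℕ, (1 - x ^ (2 ^ j)))) := by
    apply hP.congr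
    intro n
    exact partial_identity x n
  exact tendsto_nhds_unique hP' hS2
end

section
/- For any nonnegative integer J and complex s with Re(s) > 2^{-J}, the infinite product N_J(s) := ∏_{j ≥ J} ζ(2^j s)^{-1} converges and satisfies |N_J(s)| ≤ ζ(2^J Re(s)); in particular N_J is bounded on any half-plane Re(s) ≥ δ with δ > 2^{-J}. -/
open Complex Real Filter

noncomputable def Zr (x : ℝ) : ℝ := ∑' n : ℕ, ((n : ℝ) + 1) ^ (-x)

lemma Zr_summable {x : ℝ} (hx : 1 < x) :
    Summable (fun n : ℕ => ((n : ℝ) + 1) ^ (-x)) := by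
  have h := Real.summable_nat_rpow_inv.mpr hx
  have h2 := (summable_nat_add_iff 1).mpr h
  refine h2.congr fun n => ?_
  push_cast
  rw [← Real.rpow_neg (by positivity)]

lemma Zr_summable' {x : ℝ} (hx : 1 < x) :
    Summable (fun n : ℕ => ((n : ℝ) + 2) ^ (-x)) := by
  have h2 := (summable_nat_add_iff 1).mpr (Zr_summable hx)
  refine h2.congr fun n => ?_
  push_cast
  ring_nf

lemma one_le_Zr {x : ℝ} (hx : 1 < x) : 1 ≤ Zr x := by
  have := Summable.le_tsum (Zr_summable hx) 0 (fun n _ => by positivity)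
  simpa [Zr] using this

lemma Zr_anti {x y : ℝ} (hx : 1 < x) (hxy : x ≤ y) : Zr y ≤ Zr x := by
  refine Summable.tsum_le_tsum (fun n => ?_) (Zr_summable (lt_of_lt_of_le hx hxy)) (Zr_summable hx)
  have h1 : (1:ℝ) ≤ (n:ℝ)+1 := by simp [Nat.cast_nonneg]
  exact Real.rpow_le_rpow_of_exponent_le h1 (by linarith)

lemma Zr_eq_one_add {x : ℝ} (hx : 1 < x) :
    Zr x = 1 + ∑' n : ℕ, ((n : ℝ) + 2) ^ (-x) := by
  unfold Zr
  rw [Summable.tsum_eq_zero_add (Zr_summable hx)]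
  congr 1
  · norm_num
  · exact tsum_congr fun n => by push_cast; ring_nf

lemma Zr_tail_le {x y : ℝ} (hx : 1 < x) (hxy : x ≤ y) :
    Zr y - 1 ≤ (Zr x - 1) * (2 : ℝ) ^ (x - y) := by
  have hy : 1 < y := lt_of_lt_of_le hx hxy
  rw [Zr_eq_one_add hx, Zr_eq_one_add hy]
  simp only [add_sub_cancel_left]
  rw [← tsum_mul_right]
  refine Summable.tsum_le_tsum (fun n => ?_) (Zr_summable' hy) ((Zr_summable' hx).mul_right _)
  have h2 : (2 : ℝ) ≤ (n : ℝ) + 2 := by simp [Nat.cast_nonneg]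
  have key : ((n : ℝ) + 2) ^ (-y) = ((n : ℝ) + 2) ^ (-x) * ((n : ℝ) + 2) ^ (x - y) := by
    rw [← Real.rpow_add (by linarith)]
    ring_nf
  rw [key]
  refine mul_le_mul_of_nonneg_left ?_ (by positivity)
  exact Real.rpow_le_rpow_of_nonpos (by norm_num) h2 (by linarith)

lemma zeta_ofReal {x : ℝ} (hx : 1 < x) : riemannZeta (x : ℂ) = ((Zr x : ℝ) : ℂ) := by
  rw [zeta_eq_tsum_one_div_nat_add_one_cpow (by simpa using hx), Zr, Complex.ofReal_tsum]
  refine tsum_congr fun n => ?_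
  have hpos : (0 : ℝ) ≤ (n : ℝ) + 1 := by positivity
  rw [Real.rpow_neg hpos, Complex.ofReal_inv, Complex.ofReal_cpow hpos]
  push_cast
  rw [one_div]

lemma norm_zeta_ofReal {x : ℝ} (hx : 1 < x) : ‖riemannZeta (x : ℂ)‖ = Zr x := by
  rw [zeta_ofReal hx, Complex.norm_real]
  exact Real.norm_of_nonneg (by linarith [one_le_Zr hx])

lemma hasProd_inv₀ {ι : Type*} {𝕜 : Type*} [NormedField 𝕜] {f : ι → 𝕜} {a : 𝕜}
    (h : HasProd f a) (ha : a ≠ 0) : HasProd (fun i => (f i)⁻¹) a⁻¹ := by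
  have := (Filter.Tendsto.inv₀ h ha)
  simpa [HasProd, Finset.prod_inv_distrib] using this

lemma prime_cpow_norm (p : Nat.Primes) (w : ℂ) :
    ‖((p : ℕ) : ℂ) ^ (-w)‖ = ((p : ℕ) : ℝ) ^ (-w.re) := by
  rw [Complex.norm_natCast_cpow_of_pos p.prop.pos]
  simp

lemma prime_rpow_lt_one (p : Nat.Primes) {x : ℝ} (hx : 0 < x) :
    ((p : ℕ) : ℝ) ^ (-x) < 1 := by
  have h2 : (1 : ℝ) < ((p : ℕ) : ℝ) := by
    exact_mod_cast p.prop.one_lt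
  exact Real.rpow_lt_one_of_one_lt_of_neg h2 (by linarith)

lemma prime_factor_ne (p : Nat.Primes) {w : ℂ} (hw : 0 < w.re) :
    (1 : ℂ) - ((p : ℕ) : ℂ) ^ (-w) ≠ 0 := by
  intro h
  have h1 : ((p : ℕ) : ℂ) ^ (-w) = 1 := (sub_eq_zero.mp h).symm
  have h2 := prime_cpow_norm p w
  rw [h1, norm_one] at h2
  exact absurd h2.symm (ne_of_lt (prime_rpow_lt_one p hw))

lemma prime_factor_cast (p : Nat.Primes) (x : ℝ) (hx : 0 < x) :
    (1 : ℂ) - ((p : ℕ) : ℂ) ^ (-(x : ℂ)) = (((1 - ((p : ℕ) : ℝ) ^ (-x) : ℝ)) : ℂ) := by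
  rw [show ((p : ℕ) : ℂ) = (((p : ℕ) : ℝ) : ℂ) by push_cast; ring,
    show (-(x : ℂ)) = ((-x : ℝ) : ℂ) by push_cast; ring,
    ← Complex.ofReal_cpow (by positivity)]
  push_cast
  ring

/-- Euler product for `1/ζ`. -/
lemma hasProd_zeta_inv {z : ℂ} (hz : 1 < z.re) :
    HasProd (fun p : Nat.Primes => (1 : ℂ) - ((p : ℕ) : ℂ) ^ (-z)) (riemannZeta z)⁻¹ := by
  have h := riemannZeta_eulerProduct_hasProd hz
  have hne := riemannZeta_ne_zero_of_one_lt_re hz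
  have := hasProd_inv₀ h hne
  simpa [inv_inv] using this

/-- `HasProd` for the real function `p ↦ (1 - p^{-x})⁻¹` with value `Zr x`. -/
lemma hasProd_real_euler {x : ℝ} (hx : 1 < x) :
    HasProd (fun p : Nat.Primes => ((1 : ℝ) - ((p : ℕ) : ℝ) ^ (-x))⁻¹) (Zr x) := by
  have h := (riemannZeta_eulerProduct_hasProd (s := (x : ℂ)) (by simpa using hx)).norm
  rw [norm_zeta_ofReal hx] at h
  have hfun : (fun p : Nat.Primes => ((1 : ℝ) - ((p : ℕ) : ℝ) ^ (-x))⁻¹)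
      = fun p : Nat.Primes => ‖((1 : ℂ) - ((p : ℕ) : ℂ) ^ (-(x : ℂ)))⁻¹‖ := by
    funext p
    rw [prime_factor_cast p x (by linarith)]
    have h1 := prime_rpow_lt_one p (by linarith : (0 : ℝ) < x)
    simp only [norm_inv, Complex.norm_real]
    rw [Real.norm_of_nonneg (by linarith)]
  rw [hfun]
  exact h

lemma norm_zeta_inv_le {z : ℂ} (hz : 1 < z.re) :
    ‖(riemannZeta z)⁻¹‖ ≤ Zr z.re * (Zr (2 * z.re))⁻¹ := by
  have hσ2 : 1 < 2 * z.re := by linarith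
  have hL := (hasProd_zeta_inv hz).norm
  have hA := hasProd_real_euler hz
  have hB0 := hasProd_real_euler hσ2
  have hZ2pos : (0 : ℝ) < Zr (2 * z.re) := by linarith [one_le_Zr hσ2]
  have hB : HasProd (fun p : Nat.Primes => (1 : ℝ) - ((p : ℕ) : ℝ) ^ (-(2 * z.re)))
      (Zr (2 * z.re))⁻¹ := by
    simpa [inv_inv] using hasProd_inv₀ hB0 (ne_of_gt hZ2pos)
  have hAB := hA.mul hB
  refine le_of_tendsto_of_tendsto' hL hAB fun S =>
    Finset.prod_le_prod (fun p _ => norm_nonneg _) fun p _ => ?_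
  set t : ℝ := ((p : ℕ) : ℝ) ^ (-z.re) with ht
  have ht0 : (0 : ℝ) ≤ t := by positivity
  have ht1 : t < 1 := prime_rpow_lt_one p (by linarith)
  have htsq : ((p : ℕ) : ℝ) ^ (-(2 * z.re)) = t ^ 2 := by
    rw [ht, ← Real.rpow_natCast (((p : ℕ) : ℝ) ^ (-z.re)) 2, ← Real.rpow_mul (by positivity)]
    norm_num
    ring_nf
  have hub : ‖(1 : ℂ) - ((p : ℕ) : ℂ) ^ (-z)‖ ≤ 1 + t := by
    calc ‖(1 : ℂ) - ((p : ℕ) : ℂ) ^ (-z)‖ ≤ ‖(1 : ℂ)‖ + ‖((p : ℕ) : ℂ) ^ (-z)‖ := norm_sub_le _ _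
    _ = 1 + t := by rw [norm_one, prime_cpow_norm]
  have hre : ((1 : ℝ) - t)⁻¹ * (1 - ((p : ℕ) : ℝ) ^ (-(2 * z.re))) = 1 + t := by
    rw [htsq]
    have hne : (1 : ℝ) - t ≠ 0 := by linarith
    field_simp
    ring
  calc ‖(1 : ℂ) - ((p : ℕ) : ℂ) ^ (-z)‖ ≤ 1 + t := hub
  _ = ((1 : ℝ) - t)⁻¹ * (1 - ((p : ℕ) : ℝ) ^ (-(2 * z.re))) := hre.symm

lemma cpow_term_norm (z : ℂ) (n : ℕ) :
    ‖1 / ((n : ℂ) + 1) ^ z‖ = ((n : ℝ) + 1) ^ (-z.re) := by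
  rw [show ((n : ℂ) + 1) = (((n + 1 : ℕ) : ℕ) : ℂ) by push_cast; ring]
  rw [one_div, norm_inv, Complex.norm_natCast_cpow_of_pos (Nat.succ_pos n)]
  rw [← Real.rpow_neg (by positivity)]
  push_cast
  ring_nf

lemma zeta_term_summable {z : ℂ} (hz : 1 < z.re) :
    Summable (fun n : ℕ => 1 / ((n : ℂ) + 1) ^ z) := by
  refine Summable.of_norm ?_
  refine (Zr_summable hz).congr fun n => ?_
  rw [cpow_term_norm]

lemma norm_zeta_sub_one_le {z : ℂ} (hz : 1 < z.re) :
    ‖riemannZeta z - 1‖ ≤ Zr z.re - 1 := by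
  have hsum := zeta_term_summable hz
  have hζ : riemannZeta z = ∑' n : ℕ, 1 / ((n : ℂ) + 1) ^ z :=
    zeta_eq_tsum_one_div_nat_add_one_cpow hz
  rw [hζ, Summable.tsum_eq_zero_add hsum]
  simp only [Nat.cast_zero, zero_add, one_cpow, div_one]
  rw [add_sub_cancel_left]
  have h1 : ∀ n : ℕ, ‖1 / (((n + 1 : ℕ) : ℂ) + 1) ^ z‖ = ((n : ℝ) + 2) ^ (-z.re) := by
    intro n
    rw [cpow_term_norm z (n + 1)]
    push_cast
    ring_nf
  have hs2 : Summable (fun n : ℕ => ‖1 / (((n + 1 : ℕ) : ℂ) + 1) ^ z‖) :=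
    (Zr_summable' hz).congr fun n => (h1 n).symm
  calc ‖∑' n : ℕ, 1 / (((n + 1 : ℕ) : ℂ) + 1) ^ z‖
      ≤ ∑' n : ℕ, ‖1 / (((n + 1 : ℕ) : ℂ) + 1) ^ z‖ := norm_tsum_le_tsum_norm hs2
  _ = ∑' n : ℕ, ((n : ℝ) + 2) ^ (-z.re) := tsum_congr h1
  _ = Zr z.re - 1 := by rw [Zr_eq_one_add hz]; ring

lemma prod_range_ratio (g : ℕ → ℝ) (hg : ∀ n, g n ≠ 0) (n : ℕ) :
    ∏ j ∈ Finset.range n, g j / g (j + 1) = g 0 / g n := by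
  induction n with
  | zero => rw [Finset.range_zero, Finset.prod_empty, div_self (hg 0)]
  | succ n ih =>
    rw [Finset.prod_range_succ, ih]
    field_simp
    rw [mul_comm (g 0) (g n), mul_div_mul_left _ _ (hg n)]

lemma NJ_main (J : ℕ) {s : ℂ} (hs : ((2 : ℝ) ^ J)⁻¹ < s.re) :
    Multipliable (fun j : ℕ => (riemannZeta ((2 : ℂ) ^ (J + j) * s))⁻¹) ∧
    ‖∏' j : ℕ, (riemannZeta ((2 : ℂ) ^ (J + j) * s))⁻¹‖ ≤ Zr ((2 : ℝ) ^ J * s.re) := by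
  set σ := s.re with hσdef
  have h2J : (0 : ℝ) < 2 ^ J := by positivity
  have hσpos : 0 < σ := lt_trans (by positivity) hs
  set x : ℕ → ℝ := fun j => (2 : ℝ) ^ (J + j) * σ with hxdef
  have hx00 : x 0 = (2 : ℝ) ^ J * σ := by simp [hxdef]
  have hx0 : 1 < x 0 := by
    rw [hx00]
    nlinarith [mul_lt_mul_of_pos_left hs h2J, mul_inv_cancel₀ (ne_of_gt h2J)]
  have hxm : ∀ j, x j ≤ x (j + 1) := by
    intro j
    simp only [hxdef]
    rw [show J + (j + 1) = (J + j) + 1 by ring, pow_succ]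
    nlinarith [pow_pos (show (0:ℝ) < 2 by norm_num) (J + j)]
  have hxle : ∀ i j, i ≤ j → x i ≤ x j := fun i j h =>
    monotone_nat_of_le_succ hxm h
  have hx1 : ∀ j, 1 < x j := fun j => lt_of_lt_of_le hx0 (hxle 0 j (Nat.zero_le j))
  have h2x : ∀ j, 2 * x j = x (j + 1) := by
    intro j
    simp only [hxdef]
    rw [show J + (j + 1) = (J + j) + 1 by ring, pow_succ]
    ring
  have hre : ∀ j, ((2 : ℂ) ^ (J + j) * s).re = x j := by
    intro j
    rw [show (2 : ℂ) ^ (J + j) = (((2 : ℝ) ^ (J + j) : ℝ) : ℂ) by push_cast; ring,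
      Complex.re_ofReal_mul]
  set f : ℕ → ℂ := fun j => (riemannZeta ((2 : ℂ) ^ (J + j) * s))⁻¹ with hfdef
  have hone : ∀ j, 1 < ((2 : ℂ) ^ (J + j) * s).re := fun j => (hre j).symm ▸ hx1 j
  have hζne : ∀ j, riemannZeta ((2 : ℂ) ^ (J + j) * s) ≠ 0 := fun j =>
    riemannZeta_ne_zero_of_one_lt_re (hone j)
  have hfne : ∀ j, f j ≠ 0 := fun j => inv_ne_zero (hζne j)
  -- bound on each factor
  have hf_bound : ∀ j, ‖f j‖ ≤ Zr (x j) / Zr (x (j + 1)) := by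
    intro j
    have h := norm_zeta_inv_le (hone j)
    rw [hre j, h2x j] at h
    rw [div_eq_mul_inv]
    exact h
  -- bound on ‖f j - 1‖
  have hK0 : 0 ≤ Zr (x 0) * (Zr (x 0) - 1) := by
    have := one_le_Zr hx0
    nlinarith
  have hfsub : ∀ j, ‖f j - 1‖ ≤ (Zr (x 0) * (Zr (x 0) - 1)) * (1 / 2) ^ j := by
    intro j
    have h1Z : ∀ k, 1 ≤ Zr (x k) := fun k => one_le_Zr (hx1 k)
    have heq : f j - 1 = f j * (1 - riemannZeta ((2 : ℂ) ^ (J + j) * s)) := by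
      rw [mul_sub, mul_one, inv_mul_cancel₀ (hζne j)]
    rw [heq, norm_mul]
    have hb1 : ‖f j‖ ≤ Zr (x 0) := by
      refine le_trans (hf_bound j) ?_
      rw [div_le_iff₀ (by linarith [h1Z (j + 1)])]
      calc Zr (x j) ≤ Zr (x 0) := Zr_anti hx0 (hxle 0 j (Nat.zero_le j))
      _ = Zr (x 0) * 1 := (mul_one _).symm
      _ ≤ Zr (x 0) * Zr (x (j + 1)) := by nlinarith [h1Z (j + 1), h1Z 0]
    have hb2 : ‖1 - riemannZeta ((2 : ℂ) ^ (J + j) * s)‖ ≤ Zr (x j) - 1 := by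
      rw [norm_sub_rev]
      have := norm_zeta_sub_one_le (hone j)
      rwa [hre j] at this
    have hb3 : Zr (x j) - 1 ≤ (Zr (x 0) - 1) * (1 / 2) ^ j := by
      refine le_trans (Zr_tail_le hx0 (hxle 0 j (Nat.zero_le j))) ?_
      refine mul_le_mul_of_nonneg_left ?_ (by linarith [h1Z 0])
      have hxj : x 0 - x j ≤ -(j : ℝ) := by
        have h2j : ((j : ℝ) + 1) ≤ (2 : ℝ) ^ j := by
          exact_mod_cast Nat.lt_two_pow_self (n := j)
        have hxj2 : x j = (2 : ℝ) ^ j * x 0 := by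
          simp only [hxdef, hx00]
          rw [pow_add]
          ring
        nlinarith [hx0, h2j]
      calc (2 : ℝ) ^ (x 0 - x j) ≤ (2 : ℝ) ^ (-(j : ℝ)) :=
            Real.rpow_le_rpow_of_exponent_le (by norm_num) hxj
      _ = (1 / 2 : ℝ) ^ j := by
          rw [Real.rpow_neg (by norm_num), Real.rpow_natCast]
          simp [one_div, inv_pow]
    calc ‖f j‖ * ‖1 - riemannZeta ((2 : ℂ) ^ (J + j) * s)‖
        ≤ Zr (x 0) * ((Zr (x 0) - 1) * (1 / 2) ^ j) := by
          have hn1 : (0 : ℝ) ≤ ‖1 - riemannZeta ((2 : ℂ) ^ (J + j) * s)‖ := norm_nonneg _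
          have hZ0 : (0 : ℝ) ≤ Zr (x 0) := by linarith [h1Z 0]
          exact mul_le_mul hb1 (le_trans hb2 hb3) hn1 hZ0
    _ = (Zr (x 0) * (Zr (x 0) - 1)) * (1 / 2) ^ j := by ring
  -- multipliability
  have hmult : Multipliable f := by
    set K := Zr (x 0) * (Zr (x 0) - 1) with hKdef
    have htend : Filter.Tendsto (fun j : ℕ => K * (1 / 2 : ℝ) ^ j) atTop (nhds 0) := by
      have := tendsto_pow_atTop_nhds_zero_of_lt_one (show (0:ℝ) ≤ 1/2 by norm_num)
        (show (1/2:ℝ) < 1 by norm_num)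
      simpa using this.const_mul K
    have hev : ∀ᶠ j in atTop, K * (1 / 2 : ℝ) ^ j < 1 / 2 :=
      htend.eventually (gt_mem_nhds (by norm_num))
    obtain ⟨N, hN⟩ := Filter.eventually_atTop.mp hev
    have hlogsum : Summable fun j : ℕ => Complex.log (f j) := by
      rw [← summable_nat_add_iff N]
      have hgeo : Summable fun j : ℕ => (3 / 2) * (K * (1 / 2 : ℝ) ^ N) * (1 / 2 : ℝ) ^ j :=
        ((summable_geometric_of_lt_one (by norm_num) (by norm_num)).mul_left _)
      refine Summable.of_norm_bounded hgeo fun j => ?_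
      have hj : N ≤ j + N := Nat.le_add_left N j
      have hsmall : ‖f (j + N) - 1‖ ≤ 1 / 2 :=
        le_trans (hfsub (j + N)) (le_of_lt (hN (j + N) hj))
      have hlog : ‖Complex.log (f (j + N))‖ ≤ (3 / 2) * ‖f (j + N) - 1‖ := by
        have := Complex.norm_log_one_add_half_le_self (z := f (j + N) - 1) hsmall
        simpa using this
      refine le_trans hlog ?_
      refine le_trans (mul_le_mul_of_nonneg_left (hfsub (j + N)) (by norm_num)) ?_
      rw [pow_add]
      ring_nf
      exact le_refl _
    have := Complex.multipliable_of_summable_log hlogsum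
    exact this
  refine ⟨hmult, ?_⟩
  -- norm bound
  rw [Multipliable.norm_tprod hmult]
  have hnorm : Multipliable fun j => ‖f j‖ := hmult.norm
  rw [← hx00]
  refine hasProd_le_of_prod_le hnorm.hasProd fun S => ?_
  obtain ⟨n, hSn⟩ := S.exists_nat_subset_range
  have hZne : ∀ k, Zr (x k) ≠ 0 := fun k => by linarith [one_le_Zr (hx1 k)]
  have hratio1 : ∀ j, (1 : ℝ) ≤ Zr (x j) / Zr (x (j + 1)) := by
    intro j
    rw [le_div_iff₀ (by linarith [one_le_Zr (hx1 (j + 1))])]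
    simpa using Zr_anti (hx1 j) (hxm j)
  calc ∏ j ∈ S, ‖f j‖ ≤ ∏ j ∈ S, Zr (x j) / Zr (x (j + 1)) :=
        Finset.prod_le_prod (fun j _ => norm_nonneg _) (fun j _ => hf_bound j)
  _ ≤ ∏ j ∈ Finset.range n, Zr (x j) / Zr (x (j + 1)) := by
      rw [← Finset.prod_sdiff hSn]
      have h1 : (1 : ℝ) ≤ ∏ j ∈ Finset.range n \ S, Zr (x j) / Zr (x (j + 1)) := by
        calc (1 : ℝ) = ∏ j ∈ Finset.range n \ S, (1 : ℝ) := by rw [Finset.prod_const_one]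
        _ ≤ _ := Finset.prod_le_prod (fun _ _ => by norm_num) (fun j _ => hratio1 j)
      have h2 : (0 : ℝ) ≤ ∏ j ∈ S, Zr (x j) / Zr (x (j + 1)) :=
        Finset.prod_nonneg fun j _ => le_trans zero_le_one (hratio1 j)
      nlinarith
  _ = Zr (x 0) / Zr (x n) := prod_range_ratio (fun k => Zr (x k)) hZne n
  _ ≤ Zr (x 0) := by
      rw [div_le_iff₀ (by linarith [one_le_Zr (hx1 n)])]
      nlinarith [one_le_Zr (hx1 n), one_le_Zr hx0]


/-- For `Re s > 2^{-J}` the product `N_J(s) = ∏_{j ≥ J} ζ(2^j s)⁻¹` converges,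
satisfies `|N_J(s)| ≤ ζ(2^J Re s)`, and is bounded on every half-plane
`Re s ≥ δ` with `δ > 2^{-J}`. -/
theorem NJ_multipliable_bound (J : ℕ) :
    (∀ s : ℂ, ((2 : ℝ) ^ J)⁻¹ < s.re →
      Multipliable (fun j : ℕ => (riemannZeta ((2 : ℂ) ^ (J + j) * s))⁻¹) ∧
      ‖∏' j : ℕ, (riemannZeta ((2 : ℂ) ^ (J + j) * s))⁻¹‖
        ≤ ‖riemannZeta (((2 : ℝ) ^ J * s.re : ℝ) : ℂ)‖) ∧
    ∀ δ : ℝ, ((2 : ℝ) ^ J)⁻¹ < δ → ∃ C : ℝ, ∀ s : ℂ, δ ≤ s.re →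
      ‖∏' j : ℕ, (riemannZeta ((2 : ℂ) ^ (J + j) * s))⁻¹‖ ≤ C := by
  have h2J : (0 : ℝ) < 2 ^ J := by positivity
  have key : ∀ t : ℝ, ((2 : ℝ) ^ J)⁻¹ < t → 1 < (2 : ℝ) ^ J * t := by
    intro t ht
    nlinarith [mul_lt_mul_of_pos_left ht h2J, mul_inv_cancel₀ (ne_of_gt h2J)]
  constructor
  · intro s hs
    obtain ⟨hm, hb⟩ := NJ_main J hs
    refine ⟨hm, ?_⟩
    rwa [norm_zeta_ofReal (key s.re hs)]
  · intro δ hδ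
    refine ⟨Zr ((2 : ℝ) ^ J * δ), fun s hsre => ?_⟩
    have hs : ((2 : ℝ) ^ J)⁻¹ < s.re := lt_of_lt_of_le hδ hsre
    refine le_trans (NJ_main J hs).2 ?_
    exact Zr_anti (key δ hδ) (mul_le_mul_of_nonneg_left hsre (le_of_lt h2J))
end

section
/- For complex s with Re(s) > 1, the Dirichlet series ∑_{n=1}^∞ μ∞(n) n^{-s} converges absolutely and equals ∏_{j=0}^∞ ζ(2^j s)^{-1}, where ζ is the Riemann zeta function. -/
/-- The modified Möbius function `μ∞`, multiplicative with
`μ∞(p^ν) = (-1)^{s₂(ν)}`. -/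
def muInf (n : ℕ) : ℤ := n.factorization.prod fun _ ν => (-1) ^ s₂ ν


lemma s2_two_mul (m : ℕ) : s₂ (2 * m) = s₂ m := by
  rcases Nat.eq_zero_or_pos m with rfl | hm
  · rfl
  · unfold s₂
    rw [Nat.digits_def' (by norm_num) (by positivity)]
    simp [Nat.mul_div_cancel_left _ (by norm_num : 0 < 2), Nat.mul_mod_right]

lemma s2_two_mul_add_one (m : ℕ) : s₂ (2 * m + 1) = s₂ m + 1 := by
  unfold s₂
  rw [Nat.digits_def' (by norm_num) (Nat.succ_pos _)]
  have h1 : (2 * m + 1) % 2 = 1 := by omega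
  have h2 : (2 * m + 1) / 2 = m := by omega
  rw [h1, h2]
  simp [Nat.add_comm]

lemma tm_sum (ν : ℕ) :
    ∑ k ∈ Finset.range (ν + 1), ((-1 : ℤ)) ^ s₂ k
      = if Even ν then (-1 : ℤ) ^ s₂ (ν / 2) else 0 := by
  induction ν with
  | zero => simp [s₂]
  | succ ν ih =>
    rw [Finset.sum_range_succ, ih]
    rcases Nat.even_or_odd ν with hν | hν
    · obtain ⟨m, rfl⟩ := hν
      have : m + m = 2 * m := by ring
      rw [this] at *
      simp only [if_pos (even_two_mul m), Nat.mul_div_cancel_left _ (by norm_num : 0 < 2)]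
      rw [s2_two_mul_add_one, if_neg (by simp [Nat.even_add_one, parity_simps])]
      rw [pow_succ]
      ring
    · obtain ⟨m, rfl⟩ := hν
      rw [if_neg (by simp [Nat.even_add_one, parity_simps])]
      have h1 : 2 * m + 1 + 1 = 2 * (m + 1) := by ring
      rw [if_pos (by rw [h1]; exact even_two_mul _), h1, s2_two_mul,
        Nat.mul_div_cancel_left _ (by norm_num : 0 < 2)]
      ring

lemma muInf_one : muInf 1 = 1 := by simp [muInf]

lemma muInf_prime_pow {p : ℕ} (hp : p.Prime) (k : ℕ) : muInf (p ^ k) = (-1) ^ s₂ k := by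
  rw [muInf, hp.factorization_pow, Finsupp.prod_single_index]
  simp [s₂]

lemma muInf_mul {m n : ℕ} (hm : m ≠ 0) (hn : n ≠ 0) (h : Nat.Coprime m n) :
    muInf (m * n) = muInf m * muInf n := by
  rw [muInf, Nat.factorization_mul hm hn, Finsupp.prod_add_index_of_disjoint]
  · rfl
  · simpa [Nat.support_factorization] using h.disjoint_primeFactors

lemma muInf_eq_pow (n : ℕ) : muInf n = (-1) ^ (n.factorization.sum fun _ ν => s₂ ν) := by
  rw [muInf, Finsupp.sum, Finsupp.prod, ← Finset.prod_pow_eq_pow_sum]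

lemma muInf_norm (n : ℕ) : ‖((muInf n : ℤ) : ℂ)‖ = 1 := by
  rw [muInf_eq_pow]
  rcases Nat.even_or_odd (n.factorization.sum fun _ ν => s₂ ν) with h | h
  · rw [h.neg_one_pow]; simp
  · rw [h.neg_one_pow]; simp

open ArithmeticFunction
open scoped ArithmeticFunction.zeta ArithmeticFunction.Moebius

/-- `muInf` as a complex arithmetic function. -/
noncomputable def M : ArithmeticFunction ℂ :=
  ⟨fun n => if n = 0 then 0 else (muInf n : ℂ), if_pos rfl⟩

lemma M_apply {n : ℕ} (hn : n ≠ 0) : M n = (muInf n : ℂ) := if_neg hn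

lemma M_mult : M.IsMultiplicative := by
  constructor
  · rw [M_apply one_ne_zero, muInf_one]; norm_num
  · intro m n h
    rcases eq_or_ne m 0 with rfl | hm
    · have : n = 1 := by simpa using h.symm
      subst this
      simp [M]
    rcases eq_or_ne n 0 with rfl | hn
    · have : m = 1 := by simpa using h
      subst this
      simp [M]
    rw [M_apply (by positivity), M_apply hm, M_apply hn, muInf_mul hm hn h]
    push_cast; ring

/-- The "squares" arithmetic function. -/
noncomputable def T : ArithmeticFunction ℂ :=
  ⟨fun n => if IsSquare n ∧ n ≠ 0 then (muInf n.sqrt : ℂ) else 0, by simp⟩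

lemma T_apply_square {m : ℕ} (hm : m ≠ 0) : T (m * m) = (muInf m : ℂ) := by
  show (if _ ∧ _ then _ else _) = _
  rw [if_pos ⟨⟨m, rfl⟩, by positivity⟩, Nat.sqrt_eq]

lemma T_apply_not_square {n : ℕ} (hn : ¬ IsSquare n) : T n = 0 := by
  show (if _ ∧ _ then _ else _) = _
  rw [if_neg (by tauto)]

lemma T_mult : T.IsMultiplicative := by
  constructor
  · have := T_apply_square one_ne_zero
    rw [mul_one] at this
    rw [this, muInf_one]; norm_num
  · intro m n h
    rcases eq_or_ne m 0 with rfl | hm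
    · have : n = 1 := by simpa using h.symm
      subst this; simp [T]
    rcases eq_or_ne n 0 with rfl | hn
    · have : m = 1 := by simpa using h
      subst this; simp [T]
    by_cases hsq : IsSquare m ∧ IsSquare n
    · obtain ⟨⟨a, rfl⟩, ⟨b, rfl⟩⟩ := hsq
      have ha : a ≠ 0 := by rintro rfl; exact hm (by ring)
      have hb : b ≠ 0 := by rintro rfl; exact hn (by ring)
      have hab : Nat.Coprime a b :=
        Nat.Coprime.coprime_dvd_left ⟨a, rfl⟩ (Nat.Coprime.coprime_dvd_right ⟨b, rfl⟩ h)
      have : a * a * (b * b) = (a * b) * (a * b) := by ring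
      rw [this, T_apply_square (by positivity), T_apply_square ha, T_apply_square hb,
        muInf_mul ha hb hab]
      push_cast; ring
    · have hns : ¬ IsSquare (m * n) := by
        intro ⟨r, hr⟩
        apply hsq
        have hr' : m * n = r ^ 2 := by rw [hr]; ring
        obtain ⟨d, hd⟩ := exists_eq_pow_of_mul_eq_pow
          (by rw [Nat.isUnit_iff]; exact h) hr'
        obtain ⟨e, he⟩ := exists_eq_pow_of_mul_eq_pow
          (by rw [Nat.isUnit_iff]; exact h.symm) (by rw [mul_comm]; exact hr')
        exact ⟨⟨d, by rw [hd]; ring⟩, ⟨e, by rw [he]; ring⟩⟩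
      rw [T_apply_not_square hns]
      rcases not_and_or.mp hsq with hm' | hn'
      · rw [T_apply_not_square hm', zero_mul]
      · rw [T_apply_not_square hn', mul_zero]

lemma isSquare_prime_pow_iff {p : ℕ} (hp : p.Prime) (k : ℕ) :
    IsSquare (p ^ k) ↔ Even k := by
  constructor
  · rintro ⟨r, hr⟩
    have hr0 : r ≠ 0 := by
      rintro rfl; rw [mul_zero] at hr; exact pow_ne_zero k hp.pos.ne' hr
    have : (p ^ k).factorization p = ((r * r).factorization) p := by rw [hr]
    rw [hp.factorization_pow, Nat.factorization_mul hr0 hr0] at this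
    simp at this
    exact this ▸ Even.add_self _
  · rintro ⟨m, rfl⟩
    exact ⟨p ^ m, by ring⟩

lemma T_prime_pow {p : ℕ} (hp : p.Prime) (k : ℕ) :
    T (p ^ k) = if Even k then ((muInf (p ^ (k / 2)) : ℂ)) else 0 := by
  rcases Nat.even_or_odd k with hk | hk
  · obtain ⟨m, rfl⟩ := hk
    have : p ^ (m + m) = p ^ m * p ^ m := by ring
    have h2 : (m + m) / 2 = m := by omega
    rw [if_pos (Even.add_self m), h2, this, T_apply_square (pow_ne_zero m hp.pos.ne')]
  · rw [if_neg (by simpa using hk), T_apply_not_square]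
    rw [isSquare_prime_pow_iff hp]
    simpa using hk

open Finset in
lemma key_conv : (↑ζ * M : ArithmeticFunction ℂ) = T := by
  rw [IsMultiplicative.eq_iff_eq_on_prime_powers _
    (isMultiplicative_zeta.natCast.mul M_mult) _ T_mult]
  intro p k hp
  rw [coe_zeta_mul_apply, Nat.sum_divisors_prime_pow hp, T_prime_pow hp]
  have : ∀ i ∈ range (k + 1), M (p ^ i) = ((((-1 : ℤ) ^ s₂ i : ℤ)) : ℂ) := by
    intro i _
    rw [M_apply (pow_ne_zero i hp.pos.ne'), muInf_prime_pow hp]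
  rw [Finset.sum_congr rfl this, ← Int.cast_sum, tm_sum k]
  rcases Nat.even_or_odd k with hk | hk
  · rw [if_pos hk, if_pos hk, muInf_prime_pow hp]
  · rw [if_neg (by simpa using hk), if_neg (by simpa using hk)]
    norm_num

open ArithmeticFunction LSeries Filter Topology
open scoped LSeries.notation


noncomputable def c₀ : ℝ := ∑' n : ℕ, (((n : ℝ) + 2) ^ 2)⁻¹

lemma c₀_summable : Summable (fun n : ℕ => (((n : ℝ) + 2) ^ 2)⁻¹) := by
  have : Summable (fun n : ℕ => ((n : ℝ) ^ 2)⁻¹) := by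
    simpa [one_div] using Real.summable_one_div_nat_pow.mpr (by norm_num : 1 < 2)
  have := (summable_nat_add_iff 2).mpr this
  refine this.congr fun n => by push_cast; ring_nf

lemma c₀_nonneg : 0 ≤ c₀ := tsum_nonneg fun n => by positivity

/-- The basic tail bound for Dirichlet series with coefficients bounded by 1. -/
lemma tail_bound {f : ℕ → ℂ} (h1 : f 1 = 1) (hb : ∀ n, n ≠ 0 → ‖f n‖ ≤ 1)
    {w : ℂ} (hw : 2 ≤ w.re) :
    ‖LSeries f w - 1‖ ≤ 4 * c₀ * (2 : ℝ) ^ (-w.re) := by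
  have hw1 : 1 < w.re := by linarith
  have hsum : Summable (LSeries.term f w) :=
    LSeriesSummable_of_bounded_of_one_lt_re (fun n hn => by
      simpa using hb n hn) hw1
  have hbnd : ∀ n : ℕ, ‖LSeries.term f w (n + 2)‖
      ≤ (((n : ℝ) + 2) ^ 2)⁻¹ * (4 * (2 : ℝ) ^ (-w.re)) := by
    intro n
    have hn2 : ((n : ℝ) + 2) ≠ 0 := by positivity
    rw [LSeries.term_of_ne_zero (by omega), norm_div]
    have hnorm : ‖((n + 2 : ℕ) : ℂ) ^ w‖ = ((n : ℝ) + 2) ^ w.re := by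
      rw [Complex.norm_natCast_cpow_of_pos (by omega)]
      push_cast; ring_nf
    rw [hnorm]
    have hfb : ‖f (n + 2)‖ ≤ 1 := hb _ (by omega)
    have hpos : (0:ℝ) < ((n : ℝ) + 2) ^ w.re := Real.rpow_pos_of_pos (by positivity) _
    calc ‖f (n + 2)‖ / ((n : ℝ) + 2) ^ w.re
        ≤ 1 / ((n : ℝ) + 2) ^ w.re := by gcongr
      _ = ((n : ℝ) + 2) ^ (-w.re) := by rw [one_div, ← Real.rpow_neg (by positivity)]
      _ = ((n : ℝ) + 2) ^ (-(2:ℝ)) * ((n : ℝ) + 2) ^ ((2:ℝ) - w.re) := by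
          rw [← Real.rpow_add (by positivity)]; ring_nf
      _ ≤ ((n : ℝ) + 2) ^ (-(2:ℝ)) * (2 : ℝ) ^ ((2:ℝ) - w.re) := by
          apply mul_le_mul_of_nonneg_left _ (le_of_lt (Real.rpow_pos_of_pos (by positivity) _))
          exact Real.rpow_le_rpow_of_nonpos (by norm_num) (by linarith [n.cast_nonneg (α := ℝ)])
            (by linarith)
      _ = (((n : ℝ) + 2) ^ 2)⁻¹ * (4 * (2 : ℝ) ^ (-w.re)) := by
          rw [Real.rpow_neg (by positivity), Real.rpow_two,
            show (2:ℝ) - w.re = 2 + (-w.re) by ring, Real.rpow_add (by norm_num),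
            Real.rpow_two]
          norm_num
  have hsum2 : Summable (fun n : ℕ => ‖LSeries.term f w (n + 2)‖) := by
    apply Summable.of_nonneg_of_le (fun n => norm_nonneg _) hbnd
    exact c₀_summable.mul_right _
  have key : LSeries f w - 1 = ∑' n : ℕ, LSeries.term f w (n + 2) := by
    rw [LSeries, hsum.tsum_eq_zero_add, Summable.tsum_eq_zero_add (by
      simpa using (summable_nat_add_iff 1).mpr hsum)]
    simp only [LSeries.term_zero, zero_add]
    have : LSeries.term f w (0 + 1) = 1 := by
      rw [LSeries.term_of_ne_zero (by norm_num)]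
      simp [h1]
    rw [this, add_sub_cancel_left]
  rw [key]
  calc ‖∑' n : ℕ, LSeries.term f w (n + 2)‖
      ≤ ∑' n : ℕ, ‖LSeries.term f w (n + 2)‖ := norm_tsum_le_tsum_norm hsum2
    _ ≤ ∑' n : ℕ, (((n : ℝ) + 2) ^ 2)⁻¹ * (4 * (2 : ℝ) ^ (-w.re)) :=
        Summable.tsum_le_tsum hbnd hsum2 (c₀_summable.mul_right _)
    _ = 4 * c₀ * (2 : ℝ) ^ (-w.re) := by
        rw [tsum_mul_right, show (∑' n : ℕ, (((n : ℝ) + 2) ^ 2)⁻¹) = c₀ from rfl]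
        ring


lemma zeta_tail {w : ℂ} (hw : 2 ≤ w.re) :
    ‖riemannZeta w - 1‖ ≤ 4 * c₀ * (2 : ℝ) ^ (-w.re) := by
  rw [← LSeries_one_eq_riemannZeta (by linarith : 1 < w.re)]
  exact tail_bound rfl (fun n hn => by norm_num) hw

lemma inv_zeta_eq {w : ℂ} (hw : 1 < w.re) :
    (riemannZeta w)⁻¹ = LSeries ↗μ w := by
  have h := LSeries_one_mul_Lseries_moebius hw
  rw [LSeries_one_eq_riemannZeta hw] at h
  exact inv_eq_of_mul_eq_one_right h

lemma norm_moebius_le_one (n : ℕ) : ‖(↗μ : ℕ → ℂ) n‖ ≤ 1 := by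
  by_cases h : Squarefree n
  · simp only [moebius_apply_of_squarefree h]
    push_cast
    rw [norm_pow, norm_neg, norm_one, one_pow]
  · simp only [moebius_eq_zero_of_not_squarefree h]
    norm_num

lemma inv_zeta_tail {w : ℂ} (hw : 2 ≤ w.re) :
    ‖(riemannZeta w)⁻¹ - 1‖ ≤ 4 * c₀ * (2 : ℝ) ^ (-w.re) := by
  rw [inv_zeta_eq (by linarith : 1 < w.re)]
  exact tail_bound (by simp) (fun n _ => norm_moebius_le_one n) hw

lemma norm_M_le_one (n : ℕ) : ‖M n‖ ≤ 1 := by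
  rcases eq_or_ne n 0 with rfl | hn
  · simp
  · rw [M_apply hn, muInf_norm]

lemma M_summable {w : ℂ} (hw : 1 < w.re) : LSeriesSummable (↗M) w :=
  LSeriesSummable_of_bounded_of_one_lt_re (fun n _ => by simpa using norm_M_le_one n) hw

lemma M_tail {w : ℂ} (hw : 2 ≤ w.re) :
    ‖LSeries (↗M) w - 1‖ ≤ 4 * c₀ * (2 : ℝ) ^ (-w.re) := by
  exact tail_bound (by simpa using M_mult.1) (fun n _ => norm_M_le_one n) hw

lemma LSeries_T_eq (w : ℂ) : LSeries (↗T) w = LSeries (↗M) (2 * w) := by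
  have hinj : Function.Injective (fun m : ℕ => m * m) := fun a b h => by
    have h' : a * a = b * b := h
    nlinarith [h', Nat.le_total a b]
  have hsupp : Function.support (LSeries.term (↗T) w) ⊆ Set.range (fun m : ℕ => m * m) := by
    intro n hn
    by_contra hns
    apply hn
    rcases eq_or_ne n 0 with rfl | hn0
    · simp
    · rw [LSeries.term_of_ne_zero hn0]
      have : T n = 0 := by
        apply T_apply_not_square
        rintro ⟨r, rfl⟩
        exact hns ⟨r, rfl⟩
      rw [this]
      simp
  rw [LSeries, LSeries, ← hinj.tsum_eq hsupp]
  refine tsum_congr fun m => ?_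
  rcases eq_or_ne m 0 with rfl | hm
  · simp
  · rw [LSeries.term_of_ne_zero (by positivity), LSeries.term_of_ne_zero hm,
      T_apply_square hm, M_apply hm]
    congr 1
    have harg : ((m : ℕ) : ℂ) ≠ 0 := by exact_mod_cast hm
    have : ((m * m : ℕ) : ℂ) = ((m : ℕ) : ℂ) ^ (2 : ℕ) := by push_cast; ring
    rw [this, ← Complex.cpow_nat_mul' (x := ((m : ℕ) : ℂ)) (n := 2)]
    · norm_num
    · rw [Complex.natCast_arg]
      simp [Real.pi_pos]
    · rw [Complex.natCast_arg]
      norm_num [Real.pi_nonneg]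

lemma zeta_coe_eq : (↗(↑ζ : ArithmeticFunction ℂ) : ℕ → ℂ) = ↗ζ := by
  funext n
  simp [natCoe_apply]

lemma step_eq {w : ℂ} (hw : 1 < w.re) :
    riemannZeta w * LSeries (↗M) w = LSeries (↗M) (2 * w) := by
  have hz : LSeriesSummable (↗(↑ζ : ArithmeticFunction ℂ)) w := by
    rw [zeta_coe_eq]
    exact LSeriesSummable_zeta_iff.mpr hw
  have hmul := LSeries_mul' (f := (↑ζ : ArithmeticFunction ℂ)) (g := M) hz (M_summable hw)
  rw [key_conv, LSeries_T_eq, zeta_coe_eq, LSeries_zeta_eq_riemannZeta hw] at hmul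
  exact hmul.symm

lemma re_pow_mul (s : ℂ) (j : ℕ) : ((2 : ℂ) ^ j * s).re = 2 ^ j * s.re := by
  have h : ((2 : ℂ) ^ j) = (((2 : ℝ) ^ j : ℝ) : ℂ) := by push_cast; ring
  rw [h, Complex.re_ofReal_mul]

/-- For `Re s > 1` the Dirichlet series of `μ∞` converges absolutely and
equals `∏_{j ≥ 0} ζ(2^j s)⁻¹`. -/
theorem muInf_dirichlet_series (s : ℂ) (hs : 1 < s.re) :
    Summable (fun n : ℕ => ‖(muInf n : ℂ) / (n : ℂ) ^ s‖) ∧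
    ∑' n : ℕ, (muInf n : ℂ) / (n : ℂ) ^ s
      = ∏' j : ℕ, (riemannZeta ((2 : ℂ) ^ j * s))⁻¹ := by
  have hs0 : s ≠ 0 := by
    rintro rfl
    simp at hs
    linarith
  have hptw : (fun n : ℕ => (muInf n : ℂ) / (n : ℂ) ^ s) = fun n => LSeries.term (↗M) s n := by
    funext n
    rcases eq_or_ne n 0 with rfl | hn
    · rw [LSeries.term_zero, Nat.cast_zero, Complex.zero_cpow hs0, div_zero]
    · rw [LSeries.term_of_ne_zero hn, M_apply hn]
  -- facts about the real parts
  have hre1 : ∀ j : ℕ, 1 < ((2 : ℂ) ^ j * s).re := by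
    intro j
    rw [re_pow_mul]
    have h1 : (1 : ℝ) ≤ 2 ^ j := by
      simpa using pow_le_pow_right₀ (by norm_num : (1:ℝ) ≤ 2) (Nat.zero_le j)
    nlinarith
  have hre2 : ∀ j : ℕ, 1 ≤ j → 2 ≤ ((2 : ℂ) ^ j * s).re := by
    intro j hj
    rw [re_pow_mul]
    have h1 : (2 : ℝ) ≤ 2 ^ j := by
      calc (2:ℝ) = 2 ^ 1 := by norm_num
        _ ≤ 2 ^ j := pow_le_pow_right₀ (by norm_num) hj
    nlinarith
  have hrpow : ∀ j : ℕ, (2 : ℝ) ^ (-((2 : ℂ) ^ j * s).re) ≤ (1 / 2) ^ j := by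
    intro j
    have hj2 : (j : ℝ) ≤ 2 ^ j := by
      have := (Nat.lt_two_pow_self (n := j)).le
      exact_mod_cast (by push_cast; exact_mod_cast this : (j:ℝ) ≤ ((2^j : ℕ) : ℝ))
    have h1 : (j : ℝ) ≤ ((2 : ℂ) ^ j * s).re := by
      rw [re_pow_mul]
      nlinarith [pow_pos (by norm_num : (0:ℝ) < 2) j]
    calc (2 : ℝ) ^ (-((2 : ℂ) ^ j * s).re) ≤ (2 : ℝ) ^ (-(j:ℝ)) :=
          Real.rpow_le_rpow_of_exponent_le one_le_two (by linarith)
      _ = (1 / 2) ^ j := by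
          rw [Real.rpow_neg (by norm_num), Real.rpow_natCast]
          simp [one_div, inv_pow]
  set u : ℕ → ℂ := fun j => (riemannZeta ((2 : ℂ) ^ j * s))⁻¹ with hu
  have hgeo : ∀ C : ℝ, Summable (fun j : ℕ => C * (1/2 : ℝ) ^ j) := fun C =>
    (summable_geometric_of_lt_one (by norm_num) (by norm_num)).mul_left C
  have hubnd : ∀ j : ℕ, 1 ≤ j → ‖u j - 1‖ ≤ 4 * c₀ * (1/2 : ℝ) ^ j := by
    intro j hj
    calc ‖u j - 1‖ ≤ 4 * c₀ * (2:ℝ) ^ (-((2 : ℂ) ^ j * s).re) := inv_zeta_tail (hre2 j hj)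
      _ ≤ 4 * c₀ * (1/2 : ℝ) ^ j := by
          have := hrpow j
          nlinarith [c₀_nonneg]
  have hu0 : ∀ j : ℕ, u j ≠ 0 := fun j =>
    inv_ne_zero (riemannZeta_ne_zero_of_one_lt_re (hre1 j))
  have hlog : Summable (fun j : ℕ => Complex.log (u j)) := by
    apply Summable.of_norm_bounded_eventually_nat (g := fun j => 6 * c₀ * (1/2 : ℝ) ^ j) (hgeo _)
    have hev1 : ∀ᶠ j : ℕ in Filter.atTop, 4 * c₀ * (1/2 : ℝ) ^ j ≤ 1/2 := by
      apply Filter.Tendsto.eventually_le_const (by norm_num : (0:ℝ) < 1/2)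
      simpa using (tendsto_pow_atTop_nhds_zero_of_lt_one (by norm_num : (0:ℝ) ≤ 1/2)
        (by norm_num : (1/2:ℝ) < 1)).const_mul (4 * c₀)
    filter_upwards [hev1, Filter.eventually_ge_atTop 1] with j h1 h2
    have hb := hubnd j h2
    have hsmall : ‖u j - 1‖ ≤ 1/2 := hb.trans h1
    have : Complex.log (u j) = Complex.log (1 + (u j - 1)) := by rw [add_sub_cancel]
    rw [this]
    calc ‖Complex.log (1 + (u j - 1))‖ ≤ 3/2 * ‖u j - 1‖ :=
          Complex.norm_log_one_add_half_le_self hsmall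
      _ ≤ 6 * c₀ * (1/2 : ℝ) ^ j := by nlinarith
  have hmul : Multipliable u :=
    Complex.multipliable_of_summable_log hlog
  have hprod : Filter.Tendsto (fun N => ∏ j ∈ Finset.range N, u j) Filter.atTop
      (𝓝 (∏' j, u j)) := hmul.hasProd.tendsto_prod_nat
  have hiter : ∀ N : ℕ, LSeries (↗M) s
      = (∏ j ∈ Finset.range N, u j) * LSeries (↗M) ((2 : ℂ) ^ N * s) := by
    intro N
    induction N with
    | zero => simp
    | succ N ih =>
      have hw := hre1 N
      have hζ := riemannZeta_ne_zero_of_one_lt_re hw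
      have hstep := step_eq hw
      have h2 : 2 * ((2 : ℂ) ^ N * s) = (2 : ℂ) ^ (N + 1) * s := by ring
      rw [h2] at hstep
      rw [ih, Finset.prod_range_succ, ← hstep]
      have h1 : u N * riemannZeta ((2 : ℂ) ^ N * s) = 1 := inv_mul_cancel₀ hζ
      calc (∏ j ∈ Finset.range N, u j) * LSeries (↗M) ((2 : ℂ) ^ N * s)
          = (∏ j ∈ Finset.range N, u j) * ((u N * riemannZeta ((2 : ℂ) ^ N * s))
            * LSeries (↗M) ((2 : ℂ) ^ N * s)) := by rw [h1, one_mul]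
        _ = (∏ j ∈ Finset.range N, u j) * u N
            * (riemannZeta ((2 : ℂ) ^ N * s) * LSeries (↗M) ((2 : ℂ) ^ N * s)) := by ring
  have hFt : Filter.Tendsto (fun N : ℕ => LSeries (↗M) ((2 : ℂ) ^ N * s)) Filter.atTop (𝓝 1) := by
    rw [tendsto_iff_norm_sub_tendsto_zero]
    apply squeeze_zero' (Filter.Eventually.of_forall fun _ => norm_nonneg _)
    · filter_upwards [Filter.eventually_ge_atTop 1] with N hN
      calc ‖LSeries (↗M) ((2 : ℂ) ^ N * s) - 1‖
          ≤ 4 * c₀ * (2:ℝ) ^ (-((2 : ℂ) ^ N * s).re) := M_tail (hre2 N hN)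
        _ ≤ 4 * c₀ * (1/2 : ℝ) ^ N := by nlinarith [hrpow N, c₀_nonneg]
    · simpa using (tendsto_pow_atTop_nhds_zero_of_lt_one (by norm_num : (0:ℝ) ≤ 1/2)
        (by norm_num : (1/2:ℝ) < 1)).const_mul (4 * c₀)
  have hconst : Filter.Tendsto
      (fun N : ℕ => (∏ j ∈ Finset.range N, u j) * LSeries (↗M) ((2 : ℂ) ^ N * s))
      Filter.atTop (𝓝 (LSeries (↗M) s)) := by
    simp_rw [← hiter]
    exact tendsto_const_nhds
  have hlim := hprod.mul hFt
  have hmain : LSeries (↗M) s = ∏' j, u j := by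
    have := tendsto_nhds_unique hconst hlim
    rwa [mul_one] at this
  constructor
  · have heq : (fun n : ℕ => ‖(muInf n : ℂ) / (n : ℂ) ^ s‖)
        = fun n => ‖LSeries.term (↗M) s n‖ := by
      funext n
      rw [congrFun hptw n]
    rw [heq]
    apply Summable.of_nonneg_of_le (fun _ => norm_nonneg _) (fun n => ?_)
      ((Real.summable_one_div_nat_rpow (p := s.re)).mpr hs)
    rw [LSeries.norm_term_eq]
    split
    · positivity
    · rename_i hn
      rw [one_div]
      have hpos : (0:ℝ) < (n:ℝ) ^ s.re :=
        Real.rpow_pos_of_pos (by exact_mod_cast Nat.pos_of_ne_zero hn) _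
      rw [div_le_iff₀ hpos, inv_mul_cancel₀ hpos.ne']
      simpa using norm_M_le_one n
  · rw [show (∑' n : ℕ, (muInf n : ℂ) / (n : ℂ) ^ s) = LSeries (↗M) s from by
      rw [LSeries]; exact tsum_congr fun n => congrFun hptw n]
    exact hmain
end

section
/- If f and g are multiplicative arithmetic functions, then their infinitary convolution (f ×∞ g)(n) = ∑_{d |∞ n} f(d) g(n/d) is multiplicative. -/
/-- `d` is an infinitary divisor of `n`. -/
def InfinitaryDvd (d n : ℕ) : Prop :=
  d ∣ n ∧ ∀ p : ℕ, d.factorization p &&& n.factorization p = d.factorization p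

lemma infdvd_mul_iff {m n d1 d2 : ℕ} (hm : m ≠ 0) (hn : n ≠ 0) (h : Nat.Coprime m n)
    (h1 : d1 ∣ m) (h2 : d2 ∣ n) :
    InfinitaryDvd (d1 * d2) (m * n) ↔ InfinitaryDvd d1 m ∧ InfinitaryDvd d2 n := by
  have hd1 : d1 ≠ 0 := fun h0 => hm (by simpa [h0] using h1)
  have hd2 : d2 ≠ 0 := fun h0 => hn (by simpa [h0] using h2)
  have hfm := (Nat.factorization_le_iff_dvd hd1 hm).mpr h1
  have hfn := (Nat.factorization_le_iff_dvd hd2 hn).mpr h2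
  have key : ∀ p, m.factorization p = 0 ∨ n.factorization p = 0 := by
    intro p
    by_contra hc
    push_neg at hc
    have hp : p.Prime := Nat.prime_of_mem_primeFactors
      (by rw [← Nat.support_factorization]; exact Finsupp.mem_support_iff.mpr hc.1)
    have hpd : p ∣ Nat.gcd m n :=
      Nat.dvd_gcd (Nat.dvd_of_factorization_pos hc.1) (Nat.dvd_of_factorization_pos hc.2)
    rw [h] at hpd
    exact hp.one_lt.ne' (Nat.dvd_one.mp hpd)
  have hsplit : ∀ p, ((d1 * d2).factorization p &&& (m * n).factorization p
        = (d1 * d2).factorization p)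
      ↔ (d1.factorization p &&& m.factorization p = d1.factorization p)
        ∧ (d2.factorization p &&& n.factorization p = d2.factorization p) := by
    intro p
    rw [Nat.factorization_mul hd1 hd2, Nat.factorization_mul hm hn]
    simp only [Finsupp.add_apply]
    rcases key p with h0 | h0
    · have hz : d1.factorization p = 0 := Nat.le_zero.mp (h0 ▸ hfm p)
      simp [h0, hz, Nat.zero_and]
    · have hz : d2.factorization p = 0 := Nat.le_zero.mp (h0 ▸ hfn p)
      simp [h0, hz, Nat.zero_and]
  unfold InfinitaryDvd
  constructor
  · rintro ⟨-, hp⟩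
    exact ⟨⟨h1, fun p => ((hsplit p).mp (hp p)).1⟩, ⟨h2, fun p => ((hsplit p).mp (hp p)).2⟩⟩
  · rintro ⟨⟨-, hp1⟩, ⟨-, hp2⟩⟩
    exact ⟨Nat.mul_dvd_mul h1 h2, fun p => (hsplit p).mpr ⟨hp1 p, hp2 p⟩⟩

open scoped Classical in
/-- If `f` and `g` are multiplicative, so is their infinitary convolution. -/
theorem infinitaryConv_multiplicative (f g : ℕ → ℤ)
    (hf1 : f 1 = 1) (hg1 : g 1 = 1)
    (hf : ∀ m n : ℕ, Nat.Coprime m n → f (m * n) = f m * f n)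
    (hg : ∀ m n : ℕ, Nat.Coprime m n → g (m * n) = g m * g n) :
    (∑ d ∈ (1 : ℕ).divisors.filter (fun d => InfinitaryDvd d 1), f d * g (1 / d)) = 1 ∧
    ∀ m n : ℕ, m ≠ 0 → n ≠ 0 → Nat.Coprime m n →
      (∑ d ∈ (m * n).divisors.filter (fun d => InfinitaryDvd d (m * n)),
          f d * g ((m * n) / d))
        = (∑ d ∈ m.divisors.filter (fun d => InfinitaryDvd d m), f d * g (m / d)) *
          (∑ d ∈ n.divisors.filter (fun d => InfinitaryDvd d n), f d * g (n / d)) := by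
  constructor
  · have h11 : InfinitaryDvd 1 1 := ⟨dvd_rfl, fun p => by simp⟩
    simp [Nat.divisors_one, Finset.filter_singleton, h11, hf1, hg1]
  · intro m n hm hn hmn
    rw [Finset.sum_mul_sum, ← Finset.sum_product']
    symm
    apply Finset.sum_nbij' (i := fun p : ℕ × ℕ => p.1 * p.2)
      (j := fun d => (d.gcd m, d.gcd n))
    · rintro ⟨d1, d2⟩ hd
      rw [Finset.mem_product, Finset.mem_filter, Finset.mem_filter,
        Nat.mem_divisors, Nat.mem_divisors] at hd
      obtain ⟨⟨⟨h1, -⟩, hi1⟩, ⟨⟨h2, -⟩, hi2⟩⟩ := hd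
      rw [Finset.mem_filter, Nat.mem_divisors]
      exact ⟨⟨Nat.mul_dvd_mul h1 h2, mul_ne_zero hm hn⟩,
        (infdvd_mul_iff hm hn hmn h1 h2).mpr ⟨hi1, hi2⟩⟩
    · intro d hd
      rw [Finset.mem_filter, Nat.mem_divisors] at hd
      obtain ⟨⟨hdvd, -⟩, hi⟩ := hd
      have heq : d.gcd m * d.gcd n = d :=
        (Nat.gcd_mul_gcd_eq_iff_dvd_mul_of_coprime hmn).mpr hdvd
      have h1 : d.gcd m ∣ m := Nat.gcd_dvd_right d m
      have h2 : d.gcd n ∣ n := Nat.gcd_dvd_right d n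
      have := (infdvd_mul_iff hm hn hmn h1 h2).mp (by rw [heq]; exact hi)
      rw [Finset.mem_product, Finset.mem_filter, Finset.mem_filter,
        Nat.mem_divisors, Nat.mem_divisors]
      exact ⟨⟨⟨h1, hm⟩, this.1⟩, ⟨⟨h2, hn⟩, this.2⟩⟩
    · rintro ⟨d1, d2⟩ hd
      rw [Finset.mem_product, Finset.mem_filter, Finset.mem_filter,
        Nat.mem_divisors, Nat.mem_divisors] at hd
      obtain ⟨⟨⟨h1, -⟩, -⟩, ⟨⟨h2, -⟩, -⟩⟩ := hd
      have c2m : Nat.Coprime d2 m := Nat.Coprime.coprime_dvd_left h2 hmn.symm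
      have c1n : Nat.Coprime d1 n := Nat.Coprime.coprime_dvd_left h1 hmn
      have e1 : (d1 * d2).gcd m = d1 := by
        rw [mul_comm]; exact Nat.gcd_mul_of_coprime_of_dvd c2m h1
      have e2 : (d1 * d2).gcd n = d2 := Nat.gcd_mul_of_coprime_of_dvd c1n h2
      simp [e1, e2]
    · intro d hd
      rw [Finset.mem_filter, Nat.mem_divisors] at hd
      exact (Nat.gcd_mul_gcd_eq_iff_dvd_mul_of_coprime hmn).mpr hd.1.1
    · rintro ⟨d1, d2⟩ hd
      rw [Finset.mem_product, Finset.mem_filter, Finset.mem_filter,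
        Nat.mem_divisors, Nat.mem_divisors] at hd
      obtain ⟨⟨⟨h1, -⟩, -⟩, ⟨⟨h2, -⟩, -⟩⟩ := hd
      have c12 : Nat.Coprime d1 d2 :=
        (Nat.Coprime.coprime_dvd_left h1 hmn).coprime_dvd_right h2
      have cquot : Nat.Coprime (m / d1) (n / d2) :=
        Nat.Coprime.coprime_dvd_left (Nat.div_dvd_of_dvd h1)
          (hmn.coprime_dvd_right (Nat.div_dvd_of_dvd h2))
      have hdiv : m / d1 * (n / d2) = m * n / (d1 * d2) := Nat.div_mul_div_comm h1 h2
      rw [hf d1 d2 c12, ← hdiv, hg _ _ cquot]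
      ring
end

section
/- The infinitary divisibility relation is multiplicative across coprime parts: if n = n₁ n₂ with gcd(n₁, n₂) = 1, then the infinitary divisors of n are exactly the products d₁ d₂ where dᵢ is an infinitary divisor of nᵢ, and this factorization is unique. -/
lemma coprime_fact_zero {n₁ n₂ : ℕ} (hc : Nat.Coprime n₁ n₂) (p : ℕ) :
    n₁.factorization p = 0 ∨ n₂.factorization p = 0 := by
  by_contra h
  push_neg at h
  have h1 : p ∈ n₁.factorization.support := Finsupp.mem_support_iff.2 h.1
  have h2 : p ∈ n₂.factorization.support := Finsupp.mem_support_iff.2 h.2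
  rw [Nat.support_factorization] at h1 h2
  exact Finset.disjoint_left.mp (Nat.Coprime.disjoint_primeFactors hc) h1 h2

/-- For coprime `n₁, n₂`, the infinitary divisors of `n₁ n₂` are exactly the
products `d₁ d₂` with `dᵢ |∞ nᵢ`, and this factorization is unique. -/
theorem infinitaryDvd_mul_coprime (n₁ n₂ : ℕ) (h₁ : n₁ ≠ 0) (h₂ : n₂ ≠ 0)
    (hc : Nat.Coprime n₁ n₂) (d : ℕ) :
    InfinitaryDvd d (n₁ * n₂) ↔
      ∃! q : ℕ × ℕ, InfinitaryDvd q.1 n₁ ∧ InfinitaryDvd q.2 n₂ ∧ d = q.1 * q.2 := by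
  constructor
  · rintro ⟨hdvd, hand⟩
    have hd0 : d ≠ 0 := by
      rintro rfl
      exact mul_ne_zero h₁ h₂ (Nat.eq_zero_of_zero_dvd hdvd)
    set d₁ := Nat.gcd d n₁ with hd₁
    set d₂ := Nat.gcd d n₂ with hd₂
    have hg1 : d₁.factorization = d.factorization ⊓ n₁.factorization :=
      Nat.factorization_gcd hd0 h₁
    have hg2 : d₂.factorization = d.factorization ⊓ n₂.factorization :=
      Nat.factorization_gcd hd0 h₂
    have hdle : ∀ p, d.factorization p ≤ (n₁ * n₂).factorization p := fun p =>
      (Nat.factorization_le_iff_dvd hd0 (mul_ne_zero h₁ h₂)).2 hdvd p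
    -- pointwise description
    have key : ∀ p, (n₂.factorization p = 0 →
        d₁.factorization p = d.factorization p ∧ d₂.factorization p = 0) ∧
        (n₁.factorization p = 0 →
        d₂.factorization p = d.factorization p ∧ d₁.factorization p = 0) := by
      intro p
      have hle := hdle p
      rw [Nat.factorization_mul h₁ h₂] at hle
      simp only [Finsupp.add_apply] at hle
      constructor
      · intro hz
        rw [hz, add_zero] at hle
        constructor
        · rw [hg1]; simpa using min_eq_left hle
        · rw [hg2]; simp [hz]
      · intro hz
        rw [hz, zero_add] at hle
        constructor
        · rw [hg2]; simpa using min_eq_left hle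
        · rw [hg1]; simp [hz]
    have hmul : d = d₁ * d₂ := by
      have hd10 : d₁ ≠ 0 := Nat.gcd_ne_zero_left hd0
      have hd20 : d₂ ≠ 0 := Nat.gcd_ne_zero_left hd0
      refine Nat.eq_of_factorization_eq hd0 (mul_ne_zero hd10 hd20) fun p => ?_
      rw [Nat.factorization_mul hd10 hd20]
      simp only [Finsupp.add_apply]
      rcases coprime_fact_zero hc p with hz | hz
      · rcases (key p).2 hz with ⟨e1, e2⟩; omega
      · rcases (key p).1 hz with ⟨e1, e2⟩; omega
    have hinf1 : InfinitaryDvd d₁ n₁ := by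
      refine ⟨Nat.gcd_dvd_right _ _, fun p => ?_⟩
      rcases coprime_fact_zero hc p with hz | hz
      · rw [(key p).2 hz |>.2, hz]; rfl
      · rw [(key p).1 hz |>.1]
        have := hand p
        rwa [Nat.factorization_mul h₁ h₂, Finsupp.add_apply, hz, add_zero] at this
    have hinf2 : InfinitaryDvd d₂ n₂ := by
      refine ⟨Nat.gcd_dvd_right _ _, fun p => ?_⟩
      rcases coprime_fact_zero hc p with hz | hz
      · rw [(key p).2 hz |>.1]
        have := hand p
        rwa [Nat.factorization_mul h₁ h₂, Finsupp.add_apply, hz, zero_add] at this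
      · rw [(key p).1 hz |>.2, hz]; rfl
    refine ⟨(d₁, d₂), ⟨hinf1, hinf2, hmul⟩, ?_⟩
    rintro ⟨e₁, e₂⟩ ⟨⟨he1, _⟩, ⟨he2, _⟩, heq⟩
    have he1d : e₁ ∣ d := heq ▸ Dvd.intro _ rfl
    have he2d : e₂ ∣ d := heq ▸ Dvd.intro_left _ rfl
    have hce : Nat.Coprime e₁ e₂ :=
      Nat.Coprime.coprime_dvd_left he1 (Nat.Coprime.coprime_dvd_right he2 hc)
    have h1 : e₁ = d₁ := by
      refine Nat.dvd_antisymm (Nat.dvd_gcd he1d he1) ?_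
      have : Nat.Coprime d₁ e₂ :=
        Nat.Coprime.coprime_dvd_right he2
          (Nat.Coprime.coprime_dvd_left (Nat.gcd_dvd_right d n₁) hc)
      exact (Nat.Coprime.dvd_of_dvd_mul_right this (heq ▸ Nat.gcd_dvd_left d n₁))
    have h2 : e₂ = d₂ := by
      refine Nat.dvd_antisymm (Nat.dvd_gcd he2d he2) ?_
      have : Nat.Coprime d₂ e₁ :=
        Nat.Coprime.coprime_dvd_right he1
          (Nat.Coprime.coprime_dvd_left (Nat.gcd_dvd_right d n₂) hc.symm)
      exact (Nat.Coprime.dvd_of_dvd_mul_left this (heq ▸ Nat.gcd_dvd_left d n₂))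
    simp [h1, h2]
  · rintro ⟨⟨e₁, e₂⟩, ⟨⟨he1, ha1⟩, ⟨he2, ha2⟩, heq⟩, -⟩
    subst heq
    have he10 : e₁ ≠ 0 := fun h => h₁ (Nat.eq_zero_of_zero_dvd (h ▸ he1))
    have he20 : e₂ ≠ 0 := fun h => h₂ (Nat.eq_zero_of_zero_dvd (h ▸ he2))
    refine ⟨mul_dvd_mul he1 he2, fun p => ?_⟩
    rw [Nat.factorization_mul he10 he20, Nat.factorization_mul h₁ h₂]
    simp only [Finsupp.add_apply]
    rcases coprime_fact_zero hc p with hz | hz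
    · have h0 : e₁.factorization p = 0 := by
        have := ha1 p; rw [hz, Nat.and_zero] at this; exact this.symm
      rw [hz, h0, zero_add, zero_add]
      exact ha2 p
    · have h0 : e₂.factorization p = 0 := by
        have := ha2 p; rw [hz, Nat.and_zero] at this; exact this.symm
      rw [hz, h0, add_zero, add_zero]
      exact ha1 p
end

section
/- The functions μ∞ and μ** coincide: the multiplicative function whose value at p^ν is (-1)^{s₂(ν)} is the inverse of the constant function 1 under the bi-unitary convolution, i.e., for every prime power p^a with a ≥ 1, ∑_{0 ≤ b ≤ a, 2b ≠ a} (-1)^{s₂(b)} = 0. -/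
lemma s₂_two_mul (k : ℕ) : s₂ (2 * k) = s₂ k := by
  rcases Nat.eq_zero_or_pos k with rfl | hk
  · rfl
  · unfold s₂
    rw [Nat.digits_def' (by norm_num : 1 < 2) (by omega)]
    simp [Nat.mul_div_cancel_left _ (by norm_num : 0 < 2), Nat.mul_mod_right]

lemma s₂_two_mul_add_one (k : ℕ) : s₂ (2 * k + 1) = s₂ k + 1 := by
  unfold s₂
  rw [Nat.digits_def' (by norm_num : 1 < 2) (by omega)]
  have h1 : (2 * k + 1) % 2 = 1 := by omega
  have h2 : (2 * k + 1) / 2 = k := by omega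
  rw [h1, h2]
  simp [Nat.add_comm]

lemma sum_range_two_mul (n : ℕ) :
    ∑ b ∈ Finset.range (2 * n), (-1 : ℤ) ^ s₂ b = 0 := by
  induction n with
  | zero => simp
  | succ n ih =>
    have : 2 * (n + 1) = (2 * n + 1) + 1 := by ring
    rw [this, Finset.sum_range_succ, Finset.sum_range_succ, ih,
      s₂_two_mul, s₂_two_mul_add_one]
    ring

/-- `μ∞ = μ**`: the multiplicative function `p^ν ↦ (-1)^{s₂ ν}` is the inverse
of the constant `1` under the bi-unitary convolution; equivalently, for every
prime power `p^a` with `a ≥ 1`, `∑_{0 ≤ b ≤ a, 2b ≠ a} (-1)^{s₂ b} = 0`. -/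
theorem sum_neg_one_pow_biunitary (p : ℕ) (hp : p.Prime) (a : ℕ) (ha : 1 ≤ a) :
    ∑ b ∈ (Finset.range (a + 1)).filter (fun b => 2 * b ≠ a), (-1 : ℤ) ^ s₂ b = 0 := by
  rcases Nat.even_or_odd a with ⟨m, hm⟩ | ⟨m, hm⟩
  · -- a = 2m, filter removes b = m
    subst hm
    have hfe : (Finset.range (m + m + 1)).filter (fun b => 2 * b ≠ m + m)
        = (Finset.range (m + m + 1)).erase m := by
      ext b
      simp only [Finset.mem_filter, Finset.mem_erase, Finset.mem_range]
      omega
    rw [hfe, Finset.sum_erase_eq_sub (by simp)]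
    have h1 : m + m + 1 = (2 * m) + 1 := by ring
    rw [h1, Finset.sum_range_succ, sum_range_two_mul, s₂_two_mul]
    ring
  · -- a odd: condition always true
    subst hm
    rw [Finset.filter_true_of_mem (fun b _ => by omega)]
    have : 2 * m + 1 + 1 = 2 * (m + 1) := by ring
    rw [this, sum_range_two_mul]
end
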